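/- With notation as in the setup, suppose the action of G by left multiplication on the coset space G/H is 2-transitive. Then for every subset S ⊆ {1,…,n} of cardinality ε one has in ℂ[Γ]: A^0_{Φ_S} = (ε(ε−1)/2)·A^0_{Φ_{{1,2}}} − ε(ε−2)·A^0_{Φ_{{1}}} + ((ε−1)(ε−2)/2)·A^0_{Φ_∅}. -/

import Mathlib

open MonoidAlgebra Finset

noncomputable section

/-- `Γ = G × ℤ/2ℤ` (written multiplicatively). -/
abbrev Gam (G : Type*) := G × Multiplicative (ZMod 2)

/-- The element `ρ = (1,1) ∈ Γ` ("complex conjugation"). -/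
def rhoEl (G : Type*) [Group G] : Gam G := (1, Multiplicative.ofAdd (1 : ZMod 2))

/-- Embedding of `g ∈ G` into `ℂ[Γ]` via `g ↦ (g,0)`. -/
def emb {G : Type*} [Group G] (g : G) : MonoidAlgebra ℂ (Gam G) :=
  MonoidAlgebra.of ℂ (Gam G) (g, 1)

/-- `ρ` as an element of `ℂ[Γ]`. -/
def rho (G : Type*) [Group G] : MonoidAlgebra ℂ (Gam G) :=
  MonoidAlgebra.of ℂ (Gam G) (rhoEl G)

/-- `T = Σ_{g ∈ G} g ∈ ℂ[Γ]`. -/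
def Tsum (G : Type*) [Group G] [Fintype G] : MonoidAlgebra ℂ (Gam G) :=
  ∑ g : G, emb g

/-- `Σ_{x ∈ H} a·x·b ∈ ℂ[Γ]`. -/
def cosetSum {G : Type*} [Group G] [Fintype G] (H : Subgroup G) [DecidablePred (· ∈ H)]
    (a b : G) : MonoidAlgebra ℂ (Gam G) :=
  ∑ x : H, emb (a * (x : G) * b)

/-- `Φ_S = T + (ρ-1)·Σ_{i∈S} Σ_{x∈H} σ_i x ∈ ℂ[Γ]`, the CM type attached to `S`. -/
def Phi {G : Type*} [Group G] [Fintype G] (H : Subgroup G) [DecidablePred (· ∈ H)] {n : ℕ}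
    (σ : Fin n → G) (S : Finset (Fin n)) : MonoidAlgebra ℂ (Gam G) :=
  Tsum G + (rho G - 1) * ∑ i ∈ S, cosetSum H (σ i) 1

/-- The ℂ-linear map `ι : ℂ[Γ] → ℂ[Γ]` sending each `γ ∈ Γ` to `γ⁻¹`. -/
def iota (Γ : Type*) [Group Γ] : MonoidAlgebra ℂ Γ →ₗ[ℂ] MonoidAlgebra ℂ Γ :=
  MonoidAlgebra.mapDomainLinearMap ℂ ℂ fun γ : Γ => γ⁻¹

/-- `A_{Φ_S} = (1/(2hn))·Φ_S·ι(Φ_S)`. -/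
def Afun {G : Type*} [Group G] [Fintype G] (H : Subgroup G) [DecidablePred (· ∈ H)] {n : ℕ}
    (σ : Fin n → G) (S : Finset (Fin n)) : MonoidAlgebra ℂ (Gam G) :=
  ((2 * (Nat.card H) * n : ℂ))⁻¹ • (Phi H σ S * iota (Gam G) (Phi H σ S))

/-- `A⁰_{Φ_S} = (1/|Γ|)·Σ_{γ∈Γ} γ·A_{Φ_S}·γ⁻¹`. -/
def A0 {G : Type*} [Group G] [Fintype G] (H : Subgroup G) [DecidablePred (· ∈ H)] {n : ℕ}
    (σ : Fin n → G) (S : Finset (Fin n)) : MonoidAlgebra ℂ (Gam G) :=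
  ((Fintype.card (Gam G) : ℂ))⁻¹ •
    ∑ γ : Gam G, MonoidAlgebra.of ℂ (Gam G) γ * Afun H σ S * MonoidAlgebra.of ℂ (Gam G) γ⁻¹

/-! The element `ρ - 1` is central with `(ρ - 1)² = -2(ρ - 1)`, and `T` absorbs every `g ∈ G`, so
`Φ_S · ι(Φ_S)` expands into multiples of `T`, `(ρ - 1)T` and `(ρ - 1) Σ_{i,j ∈ S} σ_i H σ_j⁻¹`.
After averaging over conjugation, the term `σ_i H σ_j⁻¹` only depends on the orbit of the pair of
cosets `(σ_i H, σ_j H)`, and under 2-transitivity there are just two orbits: the diagonal and its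
complement. Hence `A⁰_{Φ_S}` is a quadratic polynomial in `#S` with coefficients in `ℂ[Γ]`, and
the identity is Lagrange interpolation at `#S = 0, 1, 2`. -/

section ConjAvg

variable (k Γ : Type*) [Field k] [Group Γ] [Fintype Γ]

def conjAvg : MonoidAlgebra k Γ →ₗ[k] MonoidAlgebra k Γ :=
  (Fintype.card Γ : k)⁻¹ •
    ∑ γ : Γ, LinearMap.mulRight k (of k Γ γ⁻¹) ∘ₗ LinearMap.mulLeft k (of k Γ γ)

variable {k Γ}

theorem conjAvg_apply (x : MonoidAlgebra k Γ) :
    conjAvg k Γ x = (Fintype.card Γ : k)⁻¹ • ∑ γ : Γ, of k Γ γ * x * of k Γ γ⁻¹ := by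
  simp [conjAvg, LinearMap.sum_apply]

theorem conjAvg_conj (γ : Γ) (x : MonoidAlgebra k Γ) :
    conjAvg k Γ (of k Γ γ * x * of k Γ γ⁻¹) = conjAvg k Γ x := by
  simp only [conjAvg_apply]
  congr 1
  refine Fintype.sum_equiv (Equiv.mulRight γ) _ _ fun δ => ?_
  simp only [Equiv.coe_mulRight, mul_inv_rev, map_mul, mul_assoc]

theorem conjAvg_eq_self [CharZero k] {x : MonoidAlgebra k Γ}
    (hx : ∀ γ, of k Γ γ * x * of k Γ γ⁻¹ = x) : conjAvg k Γ x = x := by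
  rw [conjAvg_apply, Finset.sum_congr rfl fun γ _ => hx γ, Finset.sum_const, Finset.card_univ,
    ← Nat.cast_smul_eq_nsmul k, smul_smul, inv_mul_cancel₀ (by simp), one_smul]

theorem conjAvg_mul_left {c : MonoidAlgebra k Γ} (hc : ∀ γ, Commute (of k Γ γ) c)
    (x : MonoidAlgebra k Γ) : conjAvg k Γ (c * x) = c * conjAvg k Γ x := by
  simp only [conjAvg_apply, mul_smul_comm, Finset.mul_sum, ← mul_assoc, (hc _).eq]

end ConjAvg

theorem MulAction.isPretransitive_of_two_transitive {G α : Type*} [Group G] [MulAction G α]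
    {a₀ a₁ : α} (h₀₁ : a₀ ≠ a₁)
    (h2t : ∀ a b c d : α, a ≠ b → c ≠ d → ∃ g : G, g • a = c ∧ g • b = d) :
    MulAction.IsPretransitive G α := by
  have exists_ne (a : α) : ∃ b, a ≠ b := by
    rcases eq_or_ne a a₀ with rfl | h
    exacts [⟨a₁, h₀₁⟩, ⟨a₀, h⟩]
  refine ⟨fun x y => ?_⟩
  obtain ⟨x', hx⟩ := exists_ne x
  obtain ⟨y', hy⟩ := exists_ne y
  obtain ⟨g, hg, -⟩ := h2t x x' y y' hx hy
  exact ⟨g, hg⟩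

theorem Finset.sum_sum_eq_of_diag_of_offDiag {ι M : Type*} [DecidableEq ι] [AddCommGroup M]
    (s : Finset ι) {f : ι → ι → M} {d o : M} (hd : ∀ i ∈ s, f i i = d)
    (ho : ∀ i ∈ s, ∀ j ∈ s, i ≠ j → f i j = o) :
    ∑ i ∈ s, ∑ j ∈ s, f i j = #s • (d - o) + (#s * #s) • o := by
  have hf : ∀ i ∈ s, ∀ j ∈ s, f i j = (if i = j then d - o else 0) + o := by
    intro i hi j hj
    split_ifs with h
    · subst h; rw [hd i hi, sub_add_cancel]
    · rw [ho i hi j hj h, zero_add]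
  rw [Finset.sum_congr rfl fun i hi => Finset.sum_congr rfl (hf i hi)]
  simp [Finset.sum_add_distrib, Finset.sum_ite_eq, mul_smul, smul_sub]

theorem eq_lagrange_of_quadratic {k M : Type*} [Field k] [CharZero k] [AddCommGroup M]
    [Module k M] {f : k → M} {v₀ v₁ v₂ : M} (hf : ∀ x, f x = v₀ + x • v₁ + x ^ 2 • v₂) (x : k) :
    f x = (x * (x - 1) / 2) • f 2 - (x * (x - 2)) • f 1 + ((x - 1) * (x - 2) / 2) • f 0 := by
  simp only [hf]
  match_scalars <;> ring

section Iota

variable {Γ : Type*} [Group Γ]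

theorem iota_of (γ : Γ) : iota Γ (of ℂ Γ γ) = of ℂ Γ γ⁻¹ := by
  simp [iota, MonoidAlgebra.mapDomainLinearMap_single]

theorem iota_mul (x y : MonoidAlgebra ℂ Γ) :
    iota Γ (x * y) = iota Γ y * iota Γ x := by
  induction x using MonoidAlgebra.induction_on with
  | of γ =>
    induction y using MonoidAlgebra.induction_on with
    | of δ => simp only [← map_mul, iota_of, mul_inv_rev]
    | add y y' hy hy' => simp only [mul_add, add_mul, map_add, hy, hy']
    | smul c y hy => simp only [mul_smul_comm, smul_mul_assoc, map_smul, hy]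
  | add x x' hx hx' => simp only [mul_add, add_mul, map_add, hx, hx']
  | smul c x hx => simp only [mul_smul_comm, smul_mul_assoc, map_smul, hx]

theorem iota_one : iota Γ 1 = 1 := by
  rw [← map_one (of ℂ Γ), iota_of, inv_one]

end Iota

section GroupAlgebra

variable {G : Type*} [Group G]

theorem rhoEl_mul_rhoEl : rhoEl G * rhoEl G = 1 :=
  Prod.ext (mul_one 1) (show Multiplicative.ofAdd (1 : ZMod 2) * .ofAdd 1 = 1 by decide)

theorem rho_commute (x : MonoidAlgebra ℂ (Gam G)) : Commute (rho G) x :=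
  of_commute (fun δ => show rhoEl G * δ = δ * rhoEl G from
    Prod.ext (Commute.one_left δ.1) (Commute.all _ δ.2)) x

theorem rho_sub_one_commute (x : MonoidAlgebra ℂ (Gam G)) : Commute (rho G - 1) x :=
  (rho_commute x).sub_left (Commute.one_left x)

theorem rho_mul_rho : rho G * rho G = 1 := by
  rw [rho, ← map_mul, rhoEl_mul_rhoEl, map_one]

theorem rho_sub_one_mul_self : (rho G - 1) * (rho G - 1) = (-2 : ℂ) • (rho G - 1) := by
  rw [sub_mul, mul_sub, mul_sub, rho_mul_rho, mul_one, one_mul, one_mul]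
  module

theorem iota_rho : iota (Gam G) (rho G) = rho G := by
  rw [rho, iota_of, inv_eq_of_mul_eq_one_right rhoEl_mul_rhoEl]

theorem emb_mul_emb (g g' : G) : emb g * emb g' = emb (g * g') := by
  rw [emb, emb, ← map_mul, Prod.mk_mul_mk, mul_one]
  rfl

theorem iota_emb (g : G) : iota (Gam G) (emb g) = emb g⁻¹ := by
  rw [emb, iota_of, Prod.inv_mk, inv_one]
  rfl

theorem of_mul_emb_mul_of_inv (γ : Gam G) (g : G) :
    of ℂ (Gam G) γ * emb g * of ℂ (Gam G) γ⁻¹ = emb (γ.1 * g * γ.1⁻¹) := by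
  rw [emb, emb, ← map_mul, ← map_mul]
  congr 1
  ext <;> simp

theorem conjAvg_emb_conj [Fintype G] (g : G) (x : MonoidAlgebra ℂ (Gam G)) :
    conjAvg ℂ (Gam G) (emb g * x * emb g⁻¹) = conjAvg ℂ (Gam G) x := by
  have : emb g⁻¹ = of ℂ (Gam G) (g, 1)⁻¹ := by rw [Prod.inv_mk, inv_one]; rfl
  rw [this]
  exact conjAvg_conj _ x

end GroupAlgebra

section Tsum

variable {G : Type*} [Group G] [Fintype G]

theorem emb_mul_Tsum (g : G) : emb g * Tsum G = Tsum G := by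
  rw [Tsum, Finset.mul_sum]
  exact Fintype.sum_equiv (Equiv.mulLeft g) _ _ fun x => emb_mul_emb g x

theorem Tsum_mul_emb (g : G) : Tsum G * emb g = Tsum G := by
  rw [Tsum, Finset.sum_mul]
  exact Fintype.sum_equiv (Equiv.mulRight g) _ _ fun x => emb_mul_emb x g

theorem Tsum_mul_Tsum : Tsum G * Tsum G = (Fintype.card G : ℂ) • Tsum G := by
  nth_rw 1 [Tsum]
  simp only [Finset.sum_mul, emb_mul_Tsum, Finset.sum_const, Finset.card_univ,
    Nat.cast_smul_eq_nsmul]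

theorem iota_Tsum : iota (Gam G) (Tsum G) = Tsum G := by
  rw [Tsum, map_sum]
  exact Fintype.sum_equiv (Equiv.inv G) _ _ fun g => iota_emb g

theorem conjAvg_Tsum : conjAvg ℂ (Gam G) (Tsum G) = Tsum G :=
  conjAvg_eq_self fun γ => by
    rw [Tsum, Finset.mul_sum, Finset.sum_mul]
    exact Fintype.sum_equiv (MulAut.conj γ.1).toEquiv _ _ fun g => of_mul_emb_mul_of_inv γ g

theorem conjAvg_rho_sub_one_mul_Tsum :
    conjAvg ℂ (Gam G) ((rho G - 1) * Tsum G) = (rho G - 1) * Tsum G := by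
  rw [conjAvg_mul_left fun γ => (rho_sub_one_commute (of ℂ (Gam G) γ)).symm, conjAvg_Tsum]

end Tsum

section CosetSum

variable {G : Type*} [Group G] [Fintype G] (H : Subgroup G) [DecidablePred (· ∈ H)]

theorem Tsum_mul_cosetSum (a b : G) :
    Tsum G * cosetSum H a b = (Fintype.card H : ℂ) • Tsum G := by
  simp only [cosetSum, Finset.mul_sum, Tsum_mul_emb, Finset.sum_const, Finset.card_univ,
    Nat.cast_smul_eq_nsmul]

theorem cosetSum_mul_Tsum (a b : G) :
    cosetSum H a b * Tsum G = (Fintype.card H : ℂ) • Tsum G := by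
  simp only [cosetSum, Finset.sum_mul, emb_mul_Tsum, Finset.sum_const, Finset.card_univ,
    Nat.cast_smul_eq_nsmul]

theorem cosetSum_mul_cosetSum (a b : G) :
    cosetSum H a 1 * cosetSum H 1 b = (Fintype.card H : ℂ) • cosetSum H a b := by
  have absorb (x : H) : emb (a * x * 1) * cosetSum H 1 b = cosetSum H a b := by
    rw [cosetSum, cosetSum, Finset.mul_sum]
    refine Fintype.sum_equiv (Equiv.mulLeft x) _ _ fun y => ?_
    rw [emb_mul_emb, Equiv.coe_mulLeft, Subgroup.coe_mul]
    group
  rw [cosetSum, Finset.sum_mul]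
  simp only [absorb, Finset.sum_const, Finset.card_univ, Nat.cast_smul_eq_nsmul]

theorem iota_cosetSum (a b : G) : iota (Gam G) (cosetSum H a b) = cosetSum H b⁻¹ a⁻¹ := by
  rw [cosetSum, map_sum, cosetSum]
  refine Fintype.sum_equiv (Equiv.inv H) _ _ fun x => ?_
  rw [iota_emb, Equiv.inv_apply, Subgroup.coe_inv]
  group

theorem emb_mul_cosetSum_mul_emb (g a b : G) :
    emb g * cosetSum H a b * emb g⁻¹ = cosetSum H (g * a) (b * g⁻¹) := by
  simp only [cosetSum, Finset.mul_sum, Finset.sum_mul, emb_mul_emb, mul_assoc]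

theorem cosetSum_eq_of_mk_eq {a a' b b' : G} (ha : (a : G ⧸ H) = a') (hb : (b : G ⧸ H) = b') :
    cosetSum H a b⁻¹ = cosetSum H a' b'⁻¹ := by
  obtain ⟨x, rfl⟩ : ∃ x : H, a * x = a' :=
    ⟨⟨a⁻¹ * a', QuotientGroup.eq.mp ha⟩, mul_inv_cancel_left a a'⟩
  obtain ⟨y, rfl⟩ : ∃ y : H, b * y = b' :=
    ⟨⟨b⁻¹ * b', QuotientGroup.eq.mp hb⟩, mul_inv_cancel_left b b'⟩
  refine (Fintype.sum_equiv ((Equiv.mulLeft x).trans (Equiv.mulRight y⁻¹)) _ _ fun z => ?_).symm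
  simp only [Equiv.trans_apply, Equiv.coe_mulLeft, Equiv.coe_mulRight, Subgroup.coe_mul,
    Subgroup.coe_inv]
  group

theorem conjAvg_cosetSum_eq_of_smul_eq {a b a' b' : G} (g : G) (ha : g • (a : G ⧸ H) = a')
    (hb : g • (b : G ⧸ H) = b') :
    conjAvg ℂ (Gam G) (cosetSum H a' b'⁻¹) = conjAvg ℂ (Gam G) (cosetSum H a b⁻¹) := by
  rw [MulAction.Quotient.smul_coe] at ha hb
  rw [← cosetSum_eq_of_mk_eq H ha hb, smul_eq_mul, smul_eq_mul, mul_inv_rev,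
    ← emb_mul_cosetSum_mul_emb, conjAvg_emb_conj]

end CosetSum

section Phi

variable {G : Type*} [Group G] [Fintype G] (H : Subgroup G) [DecidablePred (· ∈ H)] {n : ℕ}
  (σ : Fin n → G)

theorem iota_Phi (S : Finset (Fin n)) :
    iota (Gam G) (Phi H σ S) = Tsum G + (rho G - 1) * ∑ i ∈ S, cosetSum H 1 (σ i)⁻¹ := by
  rw [Phi, map_add, iota_Tsum, iota_mul, map_sub, iota_rho, iota_one, map_sum,
    ← (rho_sub_one_commute _).eq]
  simp only [iota_cosetSum, inv_one]

theorem Phi_mul_iota_Phi (S : Finset (Fin n)) :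
    Phi H σ S * iota (Gam G) (Phi H σ S)
      = (Fintype.card G : ℂ) • Tsum G
        + (2 * #S * Fintype.card H : ℂ) • ((rho G - 1) * Tsum G)
        + (-2 * Fintype.card H : ℂ) •
            ((rho G - 1) * ∑ i ∈ S, ∑ j ∈ S, cosetSum H (σ i) (σ j)⁻¹) := by
  have hTD : Tsum G * ∑ i ∈ S, cosetSum H 1 (σ i)⁻¹ = (#S * Fintype.card H : ℂ) • Tsum G := by
    simp only [Finset.mul_sum, Tsum_mul_cosetSum, Finset.sum_const, ← Nat.cast_smul_eq_nsmul ℂ,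
      smul_smul]
  have hCT : (∑ i ∈ S, cosetSum H (σ i) 1) * Tsum G = (#S * Fintype.card H : ℂ) • Tsum G := by
    simp only [Finset.sum_mul, cosetSum_mul_Tsum, Finset.sum_const, ← Nat.cast_smul_eq_nsmul ℂ,
      smul_smul]
  have hCD : (∑ i ∈ S, cosetSum H (σ i) 1) * ∑ i ∈ S, cosetSum H 1 (σ i)⁻¹
      = (Fintype.card H : ℂ) • ∑ i ∈ S, ∑ j ∈ S, cosetSum H (σ i) (σ j)⁻¹ := by
    simp only [Finset.sum_mul_sum, cosetSum_mul_cosetSum, Finset.smul_sum]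
  rw [iota_Phi, Phi]
  set T := Tsum G
  set r := rho G - 1
  set C := ∑ i ∈ S, cosetSum H (σ i) 1
  set D := ∑ i ∈ S, cosetSum H 1 (σ i)⁻¹
  have hrT : Commute r T := rho_sub_one_commute T
  have hrC : Commute r C := rho_sub_one_commute C
  calc (T + r * C) * (T + r * D)
      = T * T + T * (r * D) + r * C * T + r * C * (r * D) := by noncomm_ring
    _ = T * T + r * (T * D) + r * (C * T) + (r * r) * (C * D) := by
        simp only [mul_assoc, hrT.symm.left_comm, hrC.symm.left_comm]
    _ = _ := by
        rw [Tsum_mul_Tsum, hTD, hCT, hCD, rho_sub_one_mul_self]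
        simp only [mul_smul_comm, smul_mul_assoc, smul_smul]
        match_scalars <;> ring

theorem A0_eq_conjAvg (S : Finset (Fin n)) :
    A0 H σ S = conjAvg ℂ (Gam G) (Afun H σ S) := by
  rw [conjAvg_apply]
  rfl

theorem exists_A0_eq_quadratic
    (hσ : Function.Injective fun i : Fin n => (QuotientGroup.mk (σ i) : G ⧸ H))
    (h2t : ∀ a b c d : G ⧸ H, a ≠ b → c ≠ d → ∃ g : G, g • a = c ∧ g • b = d)
    {i₀ i₁ : Fin n} (h₀₁ : i₀ ≠ i₁) :
    ∃ v₀ v₁ v₂ : MonoidAlgebra ℂ (Gam G), ∀ S : Finset (Fin n),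
      A0 H σ S = v₀ + (#S : ℂ) • v₁ + (#S : ℂ) ^ 2 • v₂ := by
  have := MulAction.isPretransitive_of_two_transitive (hσ.ne h₀₁) h2t
  set d := conjAvg ℂ (Gam G) (cosetSum H (σ i₀) (σ i₀)⁻¹)
  set o := conjAvg ℂ (Gam G) (cosetSum H (σ i₀) (σ i₁)⁻¹)
  have hd (i : Fin n) : conjAvg ℂ (Gam G) (cosetSum H (σ i) (σ i)⁻¹) = d := by
    obtain ⟨g, hg⟩ := MulAction.exists_smul_eq G (σ i₀ : G ⧸ H) (σ i)
    exact conjAvg_cosetSum_eq_of_smul_eq H g hg hg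
  have ho {i j : Fin n} (hij : i ≠ j) : conjAvg ℂ (Gam G) (cosetSum H (σ i) (σ j)⁻¹) = o := by
    obtain ⟨g, hgi, hgj⟩ := h2t _ _ _ _ (hσ.ne h₀₁) (hσ.ne hij)
    exact conjAvg_cosetSum_eq_of_smul_eq H g hgi hgj
  refine ⟨(2 * Nat.card H * n : ℂ)⁻¹ • (Fintype.card G : ℂ) • Tsum G,
    (2 * Nat.card H * n : ℂ)⁻¹ • (2 * Fintype.card H : ℂ) • ((rho G - 1) * (Tsum G - (d - o))),
    (2 * Nat.card H * n : ℂ)⁻¹ • (-2 * Fintype.card H : ℂ) • ((rho G - 1) * o), fun S => ?_⟩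
  have hsum := S.sum_sum_eq_of_diag_of_offDiag (fun i _ => hd i) fun i _ j _ hij => ho hij
  rw [A0_eq_conjAvg, Afun, map_smul, Phi_mul_iota_Phi, map_add, map_add, map_smul, map_smul,
    map_smul, conjAvg_Tsum, conjAvg_rho_sub_one_mul_Tsum,
    conjAvg_mul_left fun γ => (rho_sub_one_commute (of ℂ (Gam G) γ)).symm, map_sum]
  simp only [map_sum, hsum, ← Nat.cast_smul_eq_nsmul ℂ, mul_add, mul_sub, mul_smul_comm]
  match_scalars <;> ring

end Phi

/-- under 2-transitivity of the `G`-action on `G/H`, `A⁰_{Φ_S}` is the explicit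
combination `(ε(ε-1)/2)·A⁰_{Φ_{{1,2}}} - ε(ε-2)·A⁰_{Φ_{{1}}} + ((ε-1)(ε-2)/2)·A⁰_{Φ_∅}`. -/
theorem A0_eq_of_two_transitive {G : Type*} [Group G] [Fintype G] (H : Subgroup G)
    [DecidablePred (· ∈ H)] {n : ℕ} (hn : 2 ≤ n) (σ : Fin n → G)
    (hσ : Function.Bijective fun i : Fin n => (QuotientGroup.mk (σ i) : G ⧸ H))
    (h2t : ∀ a b c d : G ⧸ H, a ≠ b → c ≠ d → ∃ g : G, g • a = c ∧ g • b = d)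
    (S : Finset (Fin n)) :
    A0 H σ S
      = (((S.card : ℂ) * ((S.card : ℂ) - 1)) / 2) •
          A0 H σ ({⟨0, by omega⟩, ⟨1, by omega⟩} : Finset (Fin n))
        - ((S.card : ℂ) * ((S.card : ℂ) - 2)) • A0 H σ ({⟨0, by omega⟩} : Finset (Fin n))
        + ((((S.card : ℂ) - 1) * ((S.card : ℂ) - 2)) / 2) • A0 H σ (∅ : Finset (Fin n)) := by
  have h₀₁ : (⟨0, by omega⟩ : Fin n) ≠ ⟨1, by omega⟩ := by simp [Fin.ext_iff]
  obtain ⟨v₀, v₁, v₂, hA⟩ := exists_A0_eq_quadratic H σ hσ.injective h2t h₀₁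
  simp only [hA, Finset.card_pair h₀₁, Finset.card_singleton, Finset.card_empty]
  push_cast
  exact eq_lagrange_of_quadratic (f := fun x : ℂ => v₀ + x • v₁ + x ^ 2 • v₂) (fun _ => rfl) _

end
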